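/- arXiv:2512.09136 — 5 statements merged into one kernel-verified Lean document; each statement's English description precedes it below -/
import Mathlib

section
/- With Y⁻(x) as above, for every real v and every u in a sufficiently small left neighborhood of 0 (i.e. u ∈ [−ε, 0] for some ε > 0), one has Re(Y⁻(u + iv)) < 0. In particular Y⁻(0) = −2μ2/Σ22 < 0 and Re(Y⁻(u+iv)) ≤ Re(Y⁻(u)) for all v. -/
open Complex


lemma sq_cpow_half (z : ℂ) : (z ^ ((1:ℂ)/2)) ^ 2 = z := by
  have := Complex.cpow_nat_inv_pow z (n := 2) two_ne_zero
  simpa [one_div] using this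

lemma re_cpow_half_nonneg (z : ℂ) : 0 ≤ (z ^ ((1:ℂ)/2)).re := by
  rcases eq_or_ne z 0 with rfl | hz
  · simp [Complex.zero_cpow (by norm_num : (1:ℂ)/2 ≠ 0)]
  · rw [Complex.cpow_def_of_ne_zero hz, Complex.exp_re]
    have h1 : (Complex.log z * ((1:ℂ)/2)).im = z.arg / 2 := by
      simp [Complex.mul_im, Complex.log_im]; ring
    rw [h1]
    have := Complex.neg_pi_lt_arg z
    have := Complex.arg_le_pi z
    have hpi := Real.pi_pos
    have hcos : 0 ≤ Real.cos (z.arg / 2) := by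
      apply Real.cos_nonneg_of_mem_Icc
      constructor <;> [linarith; linarith]
    positivity

lemma re_cpow_half_real (t : ℝ) : (((t:ℂ)) ^ ((1:ℂ)/2)).re = Real.sqrt t := by
  rcases le_or_gt 0 t with ht | ht
  · have : ((t:ℂ)) ^ ((1:ℂ)/2) = ((t ^ ((1:ℝ)/2) : ℝ) : ℂ) := by
      rw [show ((1:ℂ)/2) = (((1:ℝ)/2 : ℝ) : ℂ) by push_cast; ring]
      exact (Complex.ofReal_cpow ht _).symm
    rw [this, Complex.ofReal_re, Real.sqrt_eq_rpow]
  · set s := ((t:ℂ)) ^ ((1:ℂ)/2) with hs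
    have hsq : s ^ 2 = (t:ℂ) := sq_cpow_half _
    have him : s.re * s.im + s.im * s.re = 0 := by
      have := congrArg Complex.im hsq
      simpa [pow_two, Complex.mul_im] using this
    have hre : s.re * s.re - s.im * s.im = t := by
      have := congrArg Complex.re hsq
      simpa [pow_two, Complex.mul_re] using this
    have hprod : s.re * s.im = 0 := by linarith
    have him0 : s.im ≠ 0 := by
      intro h; rw [h] at hre; nlinarith [mul_self_nonneg s.re]
    have : s.re = 0 := (mul_eq_zero.mp hprod).resolve_right him0
    rw [this, Real.sqrt_eq_zero_of_nonpos ht.le]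

lemma re_cpow_half_ge_sqrt (z : ℂ) (t : ℝ) (ht : t ≤ z.re) :
    Real.sqrt t ≤ (z ^ ((1:ℂ)/2)).re := by
  rcases le_or_gt t 0 with h0 | h0
  · rw [Real.sqrt_eq_zero_of_nonpos h0]; exact re_cpow_half_nonneg z
  · set s := z ^ ((1:ℂ)/2) with hs
    have hsq : s ^ 2 = z := sq_cpow_half _
    have hre : s.re * s.re - s.im * s.im = z.re := by
      have := congrArg Complex.re hsq
      simpa [pow_two, Complex.mul_re] using this
    have h1 : t ≤ s.re * s.re := by nlinarith [mul_self_nonneg s.im]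
    have h2 : 0 ≤ s.re := re_cpow_half_nonneg z
    calc Real.sqrt t ≤ Real.sqrt (s.re * s.re) := Real.sqrt_le_sqrt h1
      _ = s.re := Real.sqrt_mul_self h2

/-- With Y⁻ the lower branch of the complex algebraic function solving
γ(x, Y(x)) = 0 (principal square root), for every real v and every u in a small left
neighborhood of 0, Re(Y⁻(u + iv)) < 0; in particular Y⁻(0) = −2 m2 / S22 < 0 and
Re(Y⁻(u+iv)) ≤ Re(Y⁻(u)) for all u, v. -/
theorem re_lower_branch_neg
    (S11 S12 S22 m1 m2 : ℝ)
    (hS11 : 0 < S11) (hS22 : 0 < S22) (hdet : 0 < S11 * S22 - S12 ^ 2)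
    (hm1 : 0 < m1) (hm2 : 0 < m2) :
    let Dc : ℂ → ℂ := fun w =>
      ((S12 ^ 2 - S11 * S22 : ℝ) : ℂ) * w ^ 2 + 2 * ((m2 * S12 - m1 * S22 : ℝ) : ℂ) * w
        + ((m2 ^ 2 : ℝ) : ℂ)
    let Ym : ℂ → ℂ := fun w =>
      ((1 / S22 : ℝ) : ℂ) * (-(S12 : ℂ) * w - (m2 : ℂ) - (Dc w) ^ ((1 : ℂ) / 2))
    (∃ ε > 0, ∀ u v : ℝ, -ε ≤ u → u ≤ 0 → (Ym ((u : ℂ) + (v : ℂ) * Complex.I)).re < 0)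
    ∧ Ym 0 = ((-2 * m2 / S22 : ℝ) : ℂ)
    ∧ -2 * m2 / S22 < 0
    ∧ ∀ u v : ℝ, (Ym ((u : ℂ) + (v : ℂ) * Complex.I)).re ≤ (Ym (u : ℂ)).re := by
  intro Dc Ym
  -- real discriminant value
  set a := S12 ^ 2 - S11 * S22 with ha
  set b := m2 * S12 - m1 * S22 with hb
  have key_re : ∀ u v : ℝ, (Dc ((u : ℂ) + (v : ℂ) * Complex.I)).re
      = (a * u ^ 2 + 2 * b * u + m2 ^ 2) + (S11 * S22 - S12 ^ 2) * v ^ 2 := by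
    intro u v
    simp only [Dc, Complex.add_re, Complex.mul_re, Complex.mul_im, Complex.ofReal_re,
      Complex.ofReal_im, Complex.I_re, Complex.I_im, pow_two, Complex.add_im,
      Complex.re_ofNat, Complex.im_ofNat]
    ring
  have key_real : ∀ u : ℝ, Dc ((u : ℂ)) = ((a * u ^ 2 + 2 * b * u + m2 ^ 2 : ℝ) : ℂ) := by
    intro u; simp only [Dc]; push_cast [ha, hb]; ring
  have ym_re : ∀ u v : ℝ, (Ym ((u : ℂ) + (v : ℂ) * Complex.I)).re
      = (1 / S22) * (-S12 * u - m2 - ((Dc ((u : ℂ) + (v : ℂ) * Complex.I)) ^ ((1:ℂ)/2)).re) := by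
    intro u v
    simp only [Ym, Complex.re_ofReal_mul, Complex.sub_re, Complex.mul_re, Complex.add_re,
      Complex.neg_re, Complex.neg_im, Complex.mul_im, Complex.ofReal_re, Complex.ofReal_im,
      Complex.I_re, Complex.I_im]
    ring
  have ym_re0 : ∀ u : ℝ, (Ym ((u : ℂ))).re
      = (1 / S22) * (-S12 * u - m2 - Real.sqrt (a * u ^ 2 + 2 * b * u + m2 ^ 2)) := by
    intro u
    have h := ym_re u 0
    simp only [Complex.ofReal_zero, zero_mul, add_zero] at h
    rw [h, key_real u, re_cpow_half_real]
  -- part 4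
  have part4 : ∀ u v : ℝ, (Ym ((u : ℂ) + (v : ℂ) * Complex.I)).re ≤ (Ym ((u : ℂ))).re := by
    intro u v
    rw [ym_re u v, ym_re0 u]
    have hle : a * u ^ 2 + 2 * b * u + m2 ^ 2 ≤ (Dc ((u : ℂ) + (v : ℂ) * Complex.I)).re := by
      rw [key_re u v]; nlinarith [sq_nonneg v]
    have := re_cpow_half_ge_sqrt _ _ hle
    have hpos : 0 < 1 / S22 := by positivity
    apply mul_le_mul_of_nonneg_left _ hpos.le
    linarith
  -- part 2
  have part2 : Ym 0 = ((-2 * m2 / S22 : ℝ) : ℂ) := by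
    have h0 : Dc 0 = ((m2 ^ 2 : ℝ) : ℂ) := by simp [Dc]
    have h1 : ((m2 ^ 2 : ℝ) : ℂ) ^ ((1:ℂ)/2) = ((m2 : ℝ) : ℂ) := by
      rw [show ((1:ℂ)/2) = (((1:ℝ)/2 : ℝ) : ℂ) by push_cast; ring,
        ← Complex.ofReal_cpow (by positivity), ← Real.sqrt_eq_rpow,
        Real.sqrt_sq hm2.le]
    simp only [Ym, h0, h1]
    push_cast
    field_simp
    ring
  refine ⟨?_, part2, div_neg_of_neg_of_pos (by linarith) hS22, part4⟩
  -- part 1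
  refine ⟨m2 / (2 * (|S12| + 1)), by positivity, fun u v h1 h2 => ?_⟩
  have habs : 0 ≤ |S12| := abs_nonneg _
  have hS12u : -S12 * u ≤ m2 / 2 := by
    have h3 : -S12 * u ≤ |S12| * |u| := by
      calc -S12 * u ≤ |(-S12) * u| := le_abs_self _
        _ = |S12| * |u| := by rw [abs_mul, abs_neg]
    have h4 : |u| ≤ m2 / (2 * (|S12| + 1)) := by
      rw [abs_le]; constructor <;> linarith
    have h6 : (0:ℝ) < 2 * (|S12| + 1) := by positivity
    have hx : |u| * (2 * (|S12| + 1)) ≤ m2 := by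
      have := mul_le_mul_of_nonneg_right h4 h6.le
      rwa [div_mul_cancel₀ _ (ne_of_gt h6)] at this
    nlinarith [abs_nonneg u]
  have hsq : 0 ≤ Real.sqrt (a * u ^ 2 + 2 * b * u + m2 ^ 2) := Real.sqrt_nonneg _
  have := part4 u v
  have h5 := ym_re0 u
  have hpos : 0 < 1 / S22 := by positivity
  have : (Ym ((u : ℂ))).re < 0 := by
    rw [h5]
    apply mul_neg_of_pos_of_neg hpos
    linarith
  linarith [part4 u v]
end

section
/- With the closed form of the previous statement, for every complex x with Re√(D⁺(x)) ≥ 0 and Re√(D⁻(x)) ≥ 0 (which holds for the principal branch on the complement of the cuts (−∞, x̃_b] ∪ [x_b, +∞)), the real part of γ(x, Y⁻(x), Z⁺(x)) satisfies Re γ(x, Y⁻(x), Z⁺(x)) ≤ (μ⁻2 − μ⁺2)/(Σ⁺22 + Σ⁻22) < 0; in particular γ(x, Y⁻(x), Z⁺(x)) never vanishes on ℂ \ ((−∞, x̃_b] ∪ [x_b, +∞)). -/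
open Complex

/-- for complex x such that both principal square roots of the
discriminants have nonnegative real part, the composite γ(x, Y⁻(x), Z⁺(x)) has
real part ≤ (mm2 − mp2)/(Sp22 + Sm22) < 0; in particular it never vanishes. -/
theorem gamma_composite_never_vanishes
    (Sp11 Sp12 Sp22 mp1 mp2 Sm11 Sm12 Sm22 mm1 mm2 : ℝ)
    (hSp11 : 0 < Sp11) (hSp22 : 0 < Sp22) (hdetp : 0 < Sp11 * Sp22 - Sp12 ^ 2)
    (hSm11 : 0 < Sm11) (hSm22 : 0 < Sm22) (hdetm : 0 < Sm11 * Sm22 - Sm12 ^ 2)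
    (hmp1 : 0 < mp1) (hmp2 : 0 < mp2) (hmm1 : 0 < mm1) (hmm2 : mm2 < 0)
    (x : ℂ)
    (hp : 0 ≤ ((((Sp12 ^ 2 - Sp11 * Sp22 : ℝ) : ℂ) * x ^ 2
          + 2 * ((mp2 * Sp12 - mp1 * Sp22 : ℝ) : ℂ) * x + ((mp2 ^ 2 : ℝ) : ℂ)) ^ ((1:ℂ)/2)).re)
    (hm : 0 ≤ ((((Sm12 ^ 2 - Sm11 * Sm22 : ℝ) : ℂ) * x ^ 2
          + 2 * ((mm2 * Sm12 - mm1 * Sm22 : ℝ) : ℂ) * x + ((mm2 ^ 2 : ℝ) : ℂ)) ^ ((1:ℂ)/2)).re) :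
    let Dp := ((Sp12 ^ 2 - Sp11 * Sp22 : ℝ) : ℂ) * x ^ 2
          + 2 * ((mp2 * Sp12 - mp1 * Sp22 : ℝ) : ℂ) * x + ((mp2 ^ 2 : ℝ) : ℂ)
    let Dm := ((Sm12 ^ 2 - Sm11 * Sm22 : ℝ) : ℂ) * x ^ 2
          + 2 * ((mm2 * Sm12 - mm1 * Sm22 : ℝ) : ℂ) * x + ((mm2 ^ 2 : ℝ) : ℂ)
    let Ym := ((1 / Sp22 : ℝ) : ℂ) * (-(Sp12 : ℂ) * x - (mp2 : ℂ) - Dp ^ ((1:ℂ)/2))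
    let Zp := ((1 / Sm22 : ℝ) : ℂ) * (-(Sm12 : ℂ) * x - (mm2 : ℂ) + Dm ^ ((1:ℂ)/2))
    let q1 := (Sp12 - Sm12) / (Sp22 + Sm22)
    let q2 := (Sp22 - Sm22) / (Sp22 + Sm22)
    let g := (q1 : ℂ) * x + (1/2 : ℂ) * (Ym * (1 + (q2 : ℂ)) + Zp * ((q2 : ℂ) - 1))
    g.re ≤ (mm2 - mp2) / (Sp22 + Sm22)
    ∧ (mm2 - mp2) / (Sp22 + Sm22) < 0
    ∧ g ≠ 0 := by
  intro Dp Dm Ym Zp q1 q2 g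
  have hS : (0:ℝ) < Sp22 + Sm22 := by linarith
  have hS0 : ((Sp22 + Sm22 : ℝ) : ℂ) ≠ 0 := by
    exact_mod_cast Complex.ofReal_ne_zero.mpr hS.ne'
  have hS0' : ((Sp22 : ℝ) : ℂ) + ((Sm22 : ℝ) : ℂ) ≠ 0 := by
    rw [← Complex.ofReal_add]; exact Complex.ofReal_ne_zero.mpr hS.ne'
  have hp22 : ((Sp22 : ℝ) : ℂ) ≠ 0 := Complex.ofReal_ne_zero.mpr hSp22.ne'
  have hm22 : ((Sm22 : ℝ) : ℂ) ≠ 0 := Complex.ofReal_ne_zero.mpr hSm22.ne'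
  have rc1 : (1/2 : ℝ) * (1 + q2) * (1/Sp22) = 1/(Sp22+Sm22) := by
    simp only [q2]; field_simp; ring
  have rc2 : (1/2 : ℝ) * (q2 - 1) * (1/Sm22) = -(1/(Sp22+Sm22)) := by
    simp only [q2]; field_simp; ring
  have rc3 : q1 = (Sp12 - Sm12) * (1/(Sp22+Sm22)) := by
    simp only [q1]; ring
  have hg : g = (((mm2 - mp2 : ℝ) : ℂ) - Dp ^ ((1:ℂ)/2) - Dm ^ ((1:ℂ)/2))
      / ((Sp22 + Sm22 : ℝ) : ℂ) := by
    have step1 : g = (((1/2 : ℝ) * (1 + q2) * (1/Sp22) : ℝ) : ℂ)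
          * (-(Sp12:ℂ) * x - (mp2:ℂ) - Dp ^ ((1:ℂ)/2))
        + (((1/2 : ℝ) * (q2 - 1) * (1/Sm22) : ℝ) : ℂ)
          * (-(Sm12:ℂ) * x - (mm2:ℂ) + Dm ^ ((1:ℂ)/2))
        + (q1 : ℂ) * x := by
      simp only [g, Ym, Zp]
      push_cast
      ring
    rw [step1, rc1, rc2, rc3]
    push_cast
    ring
  have hre : g.re = ((mm2 - mp2) - (Dp ^ ((1:ℂ)/2)).re - (Dm ^ ((1:ℂ)/2)).re)
      / (Sp22 + Sm22) := by
    rw [hg, Complex.div_ofReal_re]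
    simp [Complex.sub_re]
  have h1 : g.re ≤ (mm2 - mp2) / (Sp22 + Sm22) := by
    rw [hre]
    have hp' : 0 ≤ (Dp ^ ((1:ℂ)/2)).re := hp
    have hm' : 0 ≤ (Dm ^ ((1:ℂ)/2)).re := hm
    exact (div_le_div_iff_of_pos_right hS).mpr (by linarith)
  have h2 : (mm2 - mp2) / (Sp22 + Sm22) < 0 :=
    div_neg_of_neg_of_pos (by linarith) hS
  refine ⟨h1, h2, ?_⟩
  intro h0
  have : g.re < 0 := lt_of_le_of_lt h1 h2
  rw [h0] at this
  simp at this
end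

section
/- Asymptotic integral lemma: lim_{q→+∞} q^{3/2} e^{−q} ∫₀¹ √(1−s) e^{q s²} ds = √π/(4√2); equivalently ∫₀¹ √(1−s)e^{qs²}ds ∼ (√π/(4√2))·e^q/q^{3/2} as q → +∞. -/
open Real Filter MeasureTheory Set

/-- The rescaled integrand after the substitution `u = q(1-s)`. -/
noncomputable def auxF (q u : ℝ) : ℝ :=
  Set.indicator (Set.Ioc 0 q) (fun u => Real.sqrt u * Real.exp (u ^ 2 / q - 2 * u)) u

lemma aux_change_of_variables {q : ℝ} (hq : 1 ≤ q) :
    q ^ ((3 : ℝ)/2) * Real.exp (-q) *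
      ∫ s in (0:ℝ)..1, Real.sqrt (1 - s) * Real.exp (q * s ^ 2)
    = ∫ u in Set.Ioi (0:ℝ), auxF q u := by
  have hq0 : (0:ℝ) < q := lt_of_lt_of_le one_pos hq
  -- Step A: reflect s ↦ 1 - s
  have hA : (∫ s in (0:ℝ)..1, Real.sqrt (1 - s) * Real.exp (q * s ^ 2))
      = ∫ x in (0:ℝ)..1, Real.sqrt x * Real.exp (q * (1 - x) ^ 2) := by
    have h := intervalIntegral.integral_comp_sub_left (a := 0) (b := 1)
      (fun x => Real.sqrt x * Real.exp (q * (1 - x) ^ 2)) 1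
    simp only [sub_sub_cancel, sub_self, sub_zero] at h
    exact h
  -- Step B: scaling x = u / q
  have hB : (∫ u in (0:ℝ)..q, Real.sqrt (u/q) * Real.exp (q * (1 - u/q) ^ 2))
      = q • ∫ x in (0:ℝ)..1, Real.sqrt x * Real.exp (q * (1 - x) ^ 2) := by
    have h := intervalIntegral.integral_comp_div (a := 0) (b := q)
      (fun x => Real.sqrt x * Real.exp (q * (1 - x) ^ 2)) hq0.ne'
    rw [zero_div, div_self hq0.ne'] at h
    exact h
  have hB' : (∫ x in (0:ℝ)..1, Real.sqrt x * Real.exp (q * (1 - x) ^ 2))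
      = q⁻¹ * ∫ u in (0:ℝ)..q, Real.sqrt (u/q) * Real.exp (q * (1 - u/q) ^ 2) := by
    rw [hB, smul_eq_mul, inv_mul_cancel_left₀ hq0.ne']
  -- Step C: simplify the integrand
  have hC : (∫ u in (0:ℝ)..q, Real.sqrt (u/q) * Real.exp (q * (1 - u/q) ^ 2))
      = (Real.sqrt q)⁻¹ * Real.exp q *
          ∫ u in (0:ℝ)..q, Real.sqrt u * Real.exp (u ^ 2 / q - 2 * u) := by
    rw [← intervalIntegral.integral_const_mul]
    apply intervalIntegral.integral_congr
    intro u hu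
    rw [Set.uIcc_of_le hq0.le] at hu
    have hu0 : 0 ≤ u := hu.1
    dsimp only
    rw [Real.sqrt_div hu0 q]
    have hexp : Real.exp (q * (1 - u/q) ^ 2)
        = Real.exp q * Real.exp (u ^ 2 / q - 2 * u) := by
      rw [← Real.exp_add]
      congr 1
      field_simp
      ring
    rw [hexp]
    field_simp
  -- Step D: convert to an indicator integral on Ioi 0
  have hD : (∫ u in (0:ℝ)..q, Real.sqrt u * Real.exp (u ^ 2 / q - 2 * u))
      = ∫ u in Set.Ioi (0:ℝ), auxF q u := by
    rw [intervalIntegral.integral_of_le hq0.le]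
    unfold auxF
    rw [MeasureTheory.setIntegral_indicator measurableSet_Ioc,
      Set.inter_eq_right.mpr Set.Ioc_subset_Ioi_self]
  rw [hA, hB', hC, hD]
  have hq32 : q ^ ((3:ℝ)/2) = q * Real.sqrt q := by
    rw [show (3:ℝ)/2 = 1 + 1/2 by norm_num, Real.rpow_add hq0, Real.rpow_one,
      Real.sqrt_eq_rpow]
  have hsq : Real.sqrt q ≠ 0 := by positivity
  have hexpne : Real.exp q ≠ 0 := Real.exp_ne_zero q
  rw [hq32, Real.exp_neg]
  field_simp

lemma aux_integral_value :
    (∫ u in Set.Ioi (0:ℝ), Real.sqrt u * Real.exp (-2 * u))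
      = Real.sqrt Real.pi / (4 * Real.sqrt 2) := by
  have h := Real.integral_rpow_mul_exp_neg_mul_Ioi (a := 3/2) (r := 2)
    (by norm_num) (by norm_num)
  have heq : (∫ u in Set.Ioi (0:ℝ), Real.sqrt u * Real.exp (-2 * u))
      = ∫ t in Set.Ioi (0:ℝ), t ^ ((3:ℝ)/2 - 1) * Real.exp (-(2 * t)) := by
    refine MeasureTheory.integral_congr_ae (Filter.Eventually.of_forall fun t => ?_)
    show Real.sqrt t * Real.exp (-2 * t) = t ^ ((3:ℝ)/2 - 1) * Real.exp (-(2 * t))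
    rw [Real.sqrt_eq_rpow, neg_mul]
    norm_num
  rw [heq, h]
  have hG : Real.Gamma (3/2 : ℝ) = Real.sqrt Real.pi / 2 := by
    rw [show (3/2:ℝ) = 1/2 + 1 by norm_num, Real.Gamma_add_one (by norm_num),
      Real.Gamma_one_half_eq]
    ring
  have ha : ((1:ℝ)/2) ^ ((3:ℝ)/2) = ((2:ℝ) ^ ((3:ℝ)/2))⁻¹ := by
    rw [one_div, ← Real.inv_rpow (by norm_num : (0:ℝ) ≤ 2)]
  have hb : (2:ℝ) ^ ((3:ℝ)/2) = 2 * Real.sqrt 2 := by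
    rw [show (3:ℝ)/2 = 1 + 1/2 by norm_num, Real.rpow_add (by norm_num : (0:ℝ) < 2),
      Real.rpow_one, Real.sqrt_eq_rpow]
  rw [hG, ha, hb, inv_mul_eq_div, div_div]
  congr 1
  ring

/-- ∫₀¹ √(1−s) e^{q s²} ds ∼ (√π/(4√2))·e^q/q^{3/2} as q → +∞,
stated as lim_{q→+∞} q^{3/2} e^{−q} ∫₀¹ √(1−s) e^{q s²} ds = √π/(4√2). -/
theorem integral_asymptotics :
    Tendsto
      (fun q : ℝ =>
        q ^ ((3 : ℝ)/2) * Real.exp (-q) * ∫ s in (0:ℝ)..1, Real.sqrt (1 - s) * Real.exp (q * s ^ 2))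
      atTop (nhds (Real.sqrt Real.pi / (4 * Real.sqrt 2))) := by
  have key : Tendsto (fun q : ℝ => ∫ u in Set.Ioi (0:ℝ), auxF q u) atTop
      (nhds (∫ u in Set.Ioi (0:ℝ), Real.sqrt u * Real.exp (-2 * u))) := by
    apply MeasureTheory.tendsto_integral_filter_of_dominated_convergence
      (bound := fun u => Real.sqrt u * Real.exp (-u))
    · refine Filter.Eventually.of_forall fun q => ?_
      have hc : Continuous fun u : ℝ => Real.sqrt u * Real.exp (u ^ 2 / q - 2 * u) := by
        fun_prop
      exact (hc.measurable.indicator measurableSet_Ioc).aestronglyMeasurable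
    · filter_upwards [eventually_ge_atTop (1:ℝ)] with q hq
      refine Filter.Eventually.of_forall fun u => ?_
      unfold auxF
      by_cases h : u ∈ Set.Ioc (0:ℝ) q
      · rw [Set.indicator_of_mem h, Real.norm_eq_abs, abs_of_nonneg (by positivity)]
        have hq0 : (0:ℝ) < q := lt_of_lt_of_le one_pos hq
        have hle : u ^ 2 / q - 2 * u ≤ -u := by
          have : u ^ 2 / q ≤ u := by
            rw [div_le_iff₀ hq0]
            nlinarith [h.1, h.2]
          linarith
        exact mul_le_mul_of_nonneg_left (Real.exp_le_exp.mpr hle) (Real.sqrt_nonneg u)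
      · rw [Set.indicator_of_notMem h]
        simp only [norm_zero]
        positivity
    · have h0 : MeasureTheory.IntegrableOn
          (fun x : ℝ => Real.exp (-x) * x ^ ((3:ℝ)/2 - 1)) (Set.Ioi 0) :=
        Real.GammaIntegral_convergent (by norm_num)
      refine h0.congr_fun (fun x hx => ?_) measurableSet_Ioi
      rw [Real.sqrt_eq_rpow]
      norm_num
      ring
    · filter_upwards [MeasureTheory.ae_restrict_mem measurableSet_Ioi] with u hu
      have h1 : Tendsto (fun q : ℝ => u ^ 2 / q - 2 * u) atTop (nhds (0 - 2 * u)) :=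
        (Tendsto.div_atTop tendsto_const_nhds tendsto_id).sub_const (2 * u)
      have h2 : Tendsto (fun q : ℝ => Real.sqrt u * Real.exp (u ^ 2 / q - 2 * u)) atTop
          (nhds (Real.sqrt u * Real.exp (-2 * u))) := by
        rw [show (-2 : ℝ) * u = 0 - 2 * u by ring]
        exact ((Real.continuous_exp.tendsto _).comp h1).const_mul _
      refine h2.congr' ?_
      filter_upwards [eventually_ge_atTop u] with q hq
      unfold auxF
      rw [Set.indicator_of_mem (Set.mem_Ioc.mpr ⟨Set.mem_Ioi.mp hu, hq⟩)]
  rw [← aux_integral_value]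
  refine key.congr' ?_
  filter_upwards [eventually_ge_atTop (1:ℝ)] with q hq
  exact (aux_change_of_variables hq).symm
end

section
/- Escape probability formula: let h⁺(b₀) = 1 + (μ⁻2/(μ⁺2 − μ⁻2))·e^{−2b₀μ⁺2/Σ⁺22} for b₀ ≥ 0 and h⁺(b₀) = (μ⁺2/(μ⁺2 − μ⁻2))·e^{−2b₀μ⁻2/Σ⁻22} for b₀ < 0, where μ⁺2 > 0 > μ⁻2 and Σ⁺22, Σ⁻22 > 0. Then h⁺ is continuous on ℝ, takes values in (0,1), satisfies the ODE (Σ⁺22/2)h'' + μ⁺2 h' = 0 on (0,∞) and (Σ⁻22/2)h'' + μ⁻2 h' = 0 on (−∞,0), is C¹ at 0 in the sense that (1+q2)h'(0⁺) = (1−q2)h'(0⁻) holds with q2 = (Σ⁺22 − Σ⁻22)/(Σ⁺22 + Σ⁻22), and h⁺(b₀) → 1 as b₀ → +∞, h⁺(b₀) → 0 as b₀ → −∞. -/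
open Filter

private lemma hasDerivAt_cexp (c a b : ℝ) :
    HasDerivAt (fun x => c * Real.exp (a * x)) (c * a * Real.exp (a * b)) b := by
  have h1 : HasDerivAt (fun x : ℝ => a * x) a b := by
    simpa using (hasDerivAt_id b).const_mul a
  have h2 := (Real.hasDerivAt_exp (a * b)).comp b h1
  have h3 := h2.const_mul c
  rw [show c * a * Real.exp (a * b) = c * (Real.exp (a * b) * a) by ring]
  exact h3

/-- the explicit bounded harmonic function
h⁺(b₀) = 1 + (mm2/(mp2 − mm2))e^{−2b₀mp2/Sp22} for b₀ ≥ 0 and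
h⁺(b₀) = (mp2/(mp2 − mm2))e^{−2b₀mm2/Sm22} for b₀ < 0 is continuous, takes values
in (0,1), solves the ODEs (Sp22/2)h'' + mp2 h' = 0 on (0,∞) and
(Sm22/2)h'' + mm2 h' = 0 on (−∞,0), satisfies the transmission condition
(1+q2)h'(0⁺) = (1−q2)h'(0⁻) with q2 = (Sp22 − Sm22)/(Sp22 + Sm22), and has limits
1 at +∞ and 0 at −∞. -/
theorem escape_probability_harmonic
    (Sp22 Sm22 mp2 mm2 : ℝ)
    (hSp : 0 < Sp22) (hSm : 0 < Sm22) (hmp2 : 0 < mp2) (hmm2 : mm2 < 0) :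
    let h : ℝ → ℝ := fun b =>
      if 0 ≤ b then 1 + (mm2 / (mp2 - mm2)) * Real.exp (-2 * b * mp2 / Sp22)
      else (mp2 / (mp2 - mm2)) * Real.exp (-2 * b * mm2 / Sm22)
    let q2 := (Sp22 - Sm22) / (Sp22 + Sm22)
    Continuous h
    ∧ (∀ b : ℝ, h b ∈ Set.Ioo (0 : ℝ) 1)
    ∧ (∀ b : ℝ, 0 < b → (Sp22 / 2) * deriv (deriv h) b + mp2 * deriv h b = 0)
    ∧ (∀ b : ℝ, b < 0 → (Sm22 / 2) * deriv (deriv h) b + mm2 * deriv h b = 0)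
    ∧ (1 + q2) * derivWithin h (Set.Ici 0) 0 = (1 - q2) * derivWithin h (Set.Iic 0) 0
    ∧ Tendsto h atTop (nhds 1)
    ∧ Tendsto h atBot (nhds 0) := by
  intro h q2
  have hden : (0:ℝ) < mp2 - mm2 := by linarith
  have hdne : mp2 - mm2 ≠ 0 := ne_of_gt hden
  set ap : ℝ := -2 * mp2 / Sp22 with hap
  set am : ℝ := -2 * mm2 / Sm22 with ham
  set cp : ℝ := mm2 / (mp2 - mm2) with hcp
  set cm : ℝ := mp2 / (mp2 - mm2) with hcm
  have hapneg : ap < 0 := by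
    rw [hap]; apply div_neg_of_neg_of_pos (by linarith) hSp
  have hampos : 0 < am := by
    rw [ham]; apply div_pos (by linarith) hSm
  have hcpneg : cp < 0 := div_neg_of_neg_of_pos hmm2 hden
  have hcpgt : -1 < cp := by
    rw [hcp, lt_div_iff₀ hden]; linarith
  have hcmpos : 0 < cm := div_pos hmp2 hden
  have hcmlt : cm < 1 := by
    rw [hcm, div_lt_one hden]; linarith
  -- pointwise descriptions
  have hEqp : ∀ x : ℝ, 0 ≤ x → h x = 1 + cp * Real.exp (ap * x) := by
    intro x hx
    simp only [h, if_pos hx, hcp, hap]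
    ring_nf
  have h00 : (1:ℝ) + cp = cm := by
    rw [hcp, hcm]; field_simp; ring
  have hEqm : ∀ x : ℝ, x ≤ 0 → h x = cm * Real.exp (am * x) := by
    intro x hx
    rcases lt_or_eq_of_le hx with hx' | hx'
    · simp only [h, if_neg (not_le.mpr hx'), hcm, ham]
      ring_nf
    · subst hx'
      simp only [h, if_pos le_rfl, mul_zero, Real.exp_zero, mul_one]
      rw [← h00]; simp; exact hcp.symm
  -- continuity
  have hcont : Continuous h := by
    have : h = fun b : ℝ => if (0:ℝ) ≤ b then 1 + cp * Real.exp (ap * b)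
        else cm * Real.exp (am * b) := by
      funext x
      by_cases hx : (0:ℝ) ≤ x
      · rw [if_pos hx, ← hEqp x hx]
      · rw [if_neg hx, ← hEqm x (le_of_not_ge hx)]
    rw [this]
    apply Continuous.if_le
    · exact continuous_const.add (continuous_const.mul (Real.continuous_exp.comp
        (continuous_const.mul continuous_id)))
    · exact continuous_const.mul (Real.continuous_exp.comp
        (continuous_const.mul continuous_id))
    · exact continuous_const
    · exact continuous_id
    · intro x hx
      rw [← hx]
      simp [← h00]
  -- derivatives on positive side
  have hDp : ∀ b : ℝ, 0 < b → HasDerivAt h (cp * ap * Real.exp (ap * b)) b := by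
    intro b hb
    have base := (hasDerivAt_cexp cp ap b).const_add 1
    apply base.congr_of_eventuallyEq
    filter_upwards [isOpen_Ioi.mem_nhds (Set.mem_Ioi.mpr hb)] with x hx
    exact hEqp x (le_of_lt hx)
  have hD2p : ∀ b : ℝ, 0 < b → HasDerivAt (deriv h) ((cp * ap) * ap * Real.exp (ap * b)) b := by
    intro b hb
    have base := hasDerivAt_cexp (cp * ap) ap b
    apply base.congr_of_eventuallyEq
    filter_upwards [isOpen_Ioi.mem_nhds (Set.mem_Ioi.mpr hb)] with x hx
    exact (hDp x hx).deriv
  have hDm : ∀ b : ℝ, b < 0 → HasDerivAt h (cm * am * Real.exp (am * b)) b := by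
    intro b hb
    have base := hasDerivAt_cexp cm am b
    apply base.congr_of_eventuallyEq
    filter_upwards [isOpen_Iio.mem_nhds (Set.mem_Iio.mpr hb)] with x hx
    exact hEqm x (le_of_lt hx)
  have hD2m : ∀ b : ℝ, b < 0 → HasDerivAt (deriv h) ((cm * am) * am * Real.exp (am * b)) b := by
    intro b hb
    have base := hasDerivAt_cexp (cm * am) am b
    apply base.congr_of_eventuallyEq
    filter_upwards [isOpen_Iio.mem_nhds (Set.mem_Iio.mpr hb)] with x hx
    exact (hDm x hx).deriv
  refine ⟨hcont, ?_, ?_, ?_, ?_, ?_, ?_⟩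
  · -- values in (0,1)
    intro b
    by_cases hb : (0:ℝ) ≤ b
    · rw [hEqp b hb]
      have hE0 : 0 < Real.exp (ap * b) := Real.exp_pos _
      have hE1 : Real.exp (ap * b) ≤ 1 := by
        rw [Real.exp_le_one_iff]
        exact mul_nonpos_of_nonpos_of_nonneg (le_of_lt hapneg) hb
      constructor
      · nlinarith
      · nlinarith
    · push_neg at hb
      rw [hEqm b (le_of_lt hb)]
      have hE0 : 0 < Real.exp (am * b) := Real.exp_pos _
      have hE1 : Real.exp (am * b) < 1 := by
        rw [Real.exp_lt_one_iff]
        exact mul_neg_of_pos_of_neg hampos hb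
      constructor
      · exact mul_pos hcmpos hE0
      · nlinarith
  · -- ODE on (0,∞)
    intro b hb
    rw [(hD2p b hb).deriv, (hDp b hb).deriv]
    have key : Sp22 / 2 * ap + mp2 = 0 := by
      rw [hap]; field_simp; ring
    linear_combination (cp * ap * Real.exp (ap * b)) * key
  · -- ODE on (−∞,0)
    intro b hb
    rw [(hD2m b hb).deriv, (hDm b hb).deriv]
    have key : Sm22 / 2 * am + mm2 = 0 := by
      rw [ham]; field_simp; ring
    linear_combination (cm * am * Real.exp (am * b)) * key
  · -- transmission condition
    have hWp : derivWithin h (Set.Ici 0) 0 = cp * ap := by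
      have hc : derivWithin h (Set.Ici 0) 0
          = derivWithin (fun x => 1 + cp * Real.exp (ap * x)) (Set.Ici 0) 0 :=
        derivWithin_congr (fun x hx => hEqp x hx) (hEqp 0 le_rfl)
      rw [hc, ((hasDerivAt_cexp cp ap 0).const_add 1).hasDerivWithinAt.derivWithin
        (uniqueDiffOn_Ici 0 0 Set.self_mem_Ici)]
      simp
    have hWm : derivWithin h (Set.Iic 0) 0 = cm * am := by
      have hc : derivWithin h (Set.Iic 0) 0
          = derivWithin (fun x => cm * Real.exp (am * x)) (Set.Iic 0) 0 :=
        derivWithin_congr (fun x hx => hEqm x hx) (hEqm 0 le_rfl)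
      rw [hc, (hasDerivAt_cexp cm am 0).hasDerivWithinAt.derivWithin
        (uniqueDiffOn_Iic 0 0 Set.self_mem_Iic)]
      simp
    rw [hWp, hWm, hcp, hcm, hap, ham]
    show (1 + (Sp22 - Sm22) / (Sp22 + Sm22)) * _ = (1 - (Sp22 - Sm22) / (Sp22 + Sm22)) * _
    have hsum : Sp22 + Sm22 ≠ 0 := by positivity
    field_simp
    ring
  · -- limit at +∞
    have hlim : Tendsto (fun b : ℝ => 1 + cp * Real.exp (ap * b)) atTop (nhds 1) := by
      have h1 : Tendsto (fun b : ℝ => ap * b) atTop atBot :=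
        tendsto_id.const_mul_atTop_of_neg hapneg
      have h2 : Tendsto (fun b : ℝ => Real.exp (ap * b)) atTop (nhds 0) :=
        Real.tendsto_exp_atBot.comp h1
      have h3 : Tendsto (fun b : ℝ => 1 + cp * Real.exp (ap * b)) atTop (nhds (1 + cp * 0)) :=
        (tendsto_const_nhds : Tendsto (fun _ : ℝ => (1:ℝ)) atTop (nhds 1)).add (h2.const_mul cp)
      simpa using h3
    apply hlim.congr'
    filter_upwards [eventually_ge_atTop (0:ℝ)] with x hx
    exact (hEqp x hx).symm
  · -- limit at −∞
    have hlim : Tendsto (fun b : ℝ => cm * Real.exp (am * b)) atBot (nhds 0) := by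
      have h1 : Tendsto (fun b : ℝ => am * b) atBot atBot :=
        tendsto_id.const_mul_atBot hampos
      have h2 : Tendsto (fun b : ℝ => Real.exp (am * b)) atBot (nhds 0) :=
        Real.tendsto_exp_atBot.comp h1
      have := h2.const_mul cm
      simpa using this
    apply hlim.congr'
    filter_upwards [eventually_le_atBot (0:ℝ)] with x hx
    exact (hEqm x hx).symm
end

section
/- Uniqueness in a Martin representation forces a Dirac measure: let h_α (α in a compact metric space M), f₀, f_π be nonnegative functions on ℝ² such that for fixed α ∈ M and each β ∈ M with β ≠ α there exist constants ε, η, C, r₀ > 0 and a ray r ↦ p_r(β) ∈ ℝ² with h_γ(p_r(β)) ≥ C⁻¹e^{r(c(β) − η)} for all γ within ε of β and r ≥ r₀, while h_α(p_r(β)) ≤ Ce^{r(c(β) − 2η)} for r ≥ r₀ (and similarly f₀, f_π satisfy the upper bound). If a Borel measure μ on M and constants c₀, c_π ≥ 0 satisfy h_α = ∫_M h_γ dμ(γ) + c₀f₀ + c_π f_π pointwise, then μ((β−ε, β+ε) ∩ M) = 0 for every β ≠ α; consequently μ is supported on {α}. -/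
open MeasureTheory

/-- uniqueness in a Martin representation forces a Dirac measure.
Given Martin functions h_α (α in a compact metric space M) and f₀, f_π with the
stated exponential lower/upper bounds along rays, any representation
h_α = ∫ h_γ dμ(γ) + c₀ f₀ + c_π f_π forces μ((β−ε,β+ε) ∩ M) = 0 for every β ≠ α,
hence μ is supported on {α}. -/
theorem martin_representation_dirac
    {M : Type*} [MetricSpace M] [CompactSpace M] [MeasurableSpace M] [BorelSpace M]
    (h : M → ℝ × ℝ → ℝ) (f0 fpi : ℝ × ℝ → ℝ) (α : M)
    (hh : ∀ γ z, 0 ≤ h γ z) (hf0 : ∀ z, 0 ≤ f0 z) (hfpi : ∀ z, 0 ≤ fpi z)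
    (μ : Measure M) (c0 cpi : ℝ) (hc0 : 0 ≤ c0) (hcpi : 0 ≤ cpi)
    (hrep : ∀ z : ℝ × ℝ, ENNReal.ofReal (h α z) =
      (∫⁻ γ, ENNReal.ofReal (h γ z) ∂μ)
        + ENNReal.ofReal (c0 * f0 z) + ENNReal.ofReal (cpi * fpi z))
    (hbounds : ∀ β : M, β ≠ α → ∃ ε > (0:ℝ), ∃ η > (0:ℝ), ∃ C > (0:ℝ), ∃ r0 > (0:ℝ),
      ∃ c : ℝ, ∃ p : ℝ → ℝ × ℝ,
      (∀ γ : M, dist γ β < ε → ∀ r : ℝ, r0 ≤ r →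
        C⁻¹ * Real.exp (r * (c - η)) ≤ h γ (p r)) ∧
      (∀ r : ℝ, r0 ≤ r → h α (p r) ≤ C * Real.exp (r * (c - 2 * η))) ∧
      (∀ r : ℝ, r0 ≤ r → f0 (p r) ≤ C * Real.exp (r * (c - 2 * η))) ∧
      (∀ r : ℝ, r0 ≤ r → fpi (p r) ≤ C * Real.exp (r * (c - 2 * η)))) :
    (∀ β : M, β ≠ α → ∃ ε > (0:ℝ), μ (Metric.ball β ε) = 0) ∧ μ {α}ᶜ = 0 := by

  have key : ∀ β : M, β ≠ α → ∃ ε > (0:ℝ), μ (Metric.ball β ε) = 0 := by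
    intro β hβ
    obtain ⟨ε, hε, η, hη, C, hC, r0, hr0, c, p, hlow, hup, -, -⟩ := hbounds β hβ
    refine ⟨ε, hε, ?_⟩
    have hmain : ∀ r : ℝ, r0 ≤ r →
        μ (Metric.ball β ε) ≤ ENNReal.ofReal (C ^ 2 * Real.exp (-(η * r))) := by
      intro r hr
      set a : ENNReal := ENNReal.ofReal (C⁻¹ * Real.exp (r * (c - η))) with ha
      have hapos : 0 < C⁻¹ * Real.exp (r * (c - η)) :=
        mul_pos (inv_pos.mpr hC) (Real.exp_pos _)
      have ha0 : a ≠ 0 := by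
        simp [ha, ENNReal.ofReal_eq_zero, not_le, hapos]
      have hat : a ≠ ⊤ := ENNReal.ofReal_ne_top
      -- lower bound on the integral over the ball
      have h1 : μ (Metric.ball β ε) * a ≤ ∫⁻ γ, ENNReal.ofReal (h γ (p r)) ∂μ := by
        have : μ (Metric.ball β ε) * a
            = ∫⁻ γ, (Metric.ball β ε).indicator (fun _ => a) γ ∂μ := by
          rw [lintegral_indicator_const Metric.isOpen_ball.measurableSet]
          rw [mul_comm]
        rw [this]
        refine lintegral_mono fun γ => ?_
        by_cases hγ : γ ∈ Metric.ball β ε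
        · simp only [Set.indicator_of_mem hγ, ha]
          exact ENNReal.ofReal_le_ofReal (hlow γ (Metric.mem_ball.mp hγ) r hr)
        · simp [Set.indicator_of_notMem hγ]
      have h2 : (∫⁻ γ, ENNReal.ofReal (h γ (p r)) ∂μ)
          ≤ ENNReal.ofReal (h α (p r)) := by
        rw [hrep (p r)]
        exact le_add_right (le_add_right le_rfl)
      have h3 : ENNReal.ofReal (h α (p r))
          ≤ ENNReal.ofReal (C * Real.exp (r * (c - 2 * η))) :=
        ENNReal.ofReal_le_ofReal (hup r hr)
      have h4 : μ (Metric.ball β ε) * a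
          ≤ ENNReal.ofReal (C ^ 2 * Real.exp (-(η * r))) * a := by
        have heq : ENNReal.ofReal (C ^ 2 * Real.exp (-(η * r))) * a
            = ENNReal.ofReal (C * Real.exp (r * (c - 2 * η))) := by
          rw [ha, ← ENNReal.ofReal_mul (by positivity)]
          congr 1
          rw [mul_mul_mul_comm, ← Real.exp_add]
          have hCe : C ^ 2 * C⁻¹ = C := by field_simp
          rw [hCe]
          congr 1
          ring
        rw [heq]
        exact (h1.trans h2).trans h3
      exact (ENNReal.mul_le_mul_iff_left ha0 hat).mp h4
    -- take r → ∞
    have htend : Filter.Tendsto (fun r : ℝ => ENNReal.ofReal (C ^ 2 * Real.exp (-(η * r))))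
        Filter.atTop (nhds 0) := by
      have h5 : Filter.Tendsto (fun r : ℝ => C ^ 2 * Real.exp (-(η * r)))
          Filter.atTop (nhds 0) := by
        have : Filter.Tendsto (fun r : ℝ => -(η * r)) Filter.atTop Filter.atBot := by
          apply Filter.tendsto_neg_atBot_iff.mpr
          exact Filter.Tendsto.const_mul_atTop hη Filter.tendsto_id
        have := Real.tendsto_exp_atBot.comp this
        simpa using this.const_mul (C ^ 2)
      have := (ENNReal.continuous_ofReal.tendsto 0).comp h5
      simpa [Function.comp_def] using this
    refine le_antisymm ?_ zero_le
    refine ge_of_tendsto htend ?_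
    filter_upwards [Filter.eventually_ge_atTop r0] with r hr using hmain r hr
  refine ⟨key, ?_⟩
  apply measure_null_of_locally_null
  intro x hx
  obtain ⟨ε, hε, h0⟩ := key x hx
  exact ⟨Metric.ball x ε, nhdsWithin_le_nhds (Metric.ball_mem_nhds x hε), h0⟩
end
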